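/- Let A ⊆ F_q with |A| ≥ C q^{1/2 + 1/(2d)} for a sufficiently large absolute constant C, and suppose |A+A| ≤ C'|A|. Then |A^d| ≥ cq for some constant c > 0 depending only on C, C', d. -/

import Mathlib

/-!
Vinh's point–line incidence bound in `F_q²` drives a growth step: if `|A + A| ≤ K|A|` and
`0 ∉ X`, the `|X||A|` lines `y = m (x - b)` (`m ∈ X`, `b ∈ A`) each contain the `|A|` points
`(b + c, m c)` of `(A + A) × XA`, which forces `|XA| ≥ min (q / 2K) (|X| |A|² / 4Kq)`.
Iterating with `X = A, A², …` gives `|A^d| ≥ min (q / 2K) (|A| (|A|² / 4Kq)^(d-1))`, and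
`|A| ≥ 4K q^(1/2 + 1/2d)` makes the second term at least `q`.
-/

open Finset Pointwise

namespace PointLine

variable {F : Type*} [Field F] [DecidableEq F]

/-- `l = (m, c)` encodes the non-vertical line `y = m x + c`. -/
def LiesOn (p l : F × F) : Prop := p.2 = l.1 * p.1 + l.2

instance (p l : F × F) : Decidable (LiesOn p l) := inferInstanceAs (Decidable (_ = _))

theorem eq_of_liesOn_of_ne {p p' l l' : F × F} (hl : l ≠ l') (hp : LiesOn p l)
    (hp' : LiesOn p l') (hq : LiesOn p' l) (hq' : LiesOn p' l') : p = p' := by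
  unfold LiesOn at *
  by_cases hm : l.1 = l'.1
  · exact absurd (Prod.ext hm (by linear_combination hp' - hp - p.1 * hm)) hl
  · have hx : p.1 = p'.1 := mul_left_cancel₀ (sub_ne_zero.mpr hm)
      (by linear_combination hp' - hp - hq' + hq)
    exact Prod.ext hx (by rw [hp, hq, hx])

def incidences (P L : Finset (F × F)) : ℕ := ∑ p ∈ P, #(L.bipartiteAbove LiesOn p)

variable [Fintype F]

theorem card_bipartiteBelow_univ_liesOn (l : F × F) :
    #(univ.bipartiteBelow LiesOn l) = Fintype.card F := by
  have : univ.bipartiteBelow LiesOn l = univ.image fun x => (x, l.1 * x + l.2) := by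
    ext ⟨x, y⟩
    simp [LiesOn, eq_comm]
  rw [this, card_image_of_injective _ fun x y h => congrArg Prod.fst h, card_univ]

theorem sum_card_bipartiteAbove_liesOn (L : Finset (F × F)) :
    ∑ p, #(L.bipartiteAbove LiesOn p) = #L * Fintype.card F := by
  rw [sum_card_bipartiteAbove_eq_sum_card_bipartiteBelow,
    sum_congr rfl fun l _ => card_bipartiteBelow_univ_liesOn l, sum_const, smul_eq_mul]

/-- Two distinct lines meet in at most one point, so the pairs of distinct lines through a common
point number at most `#L ^ 2`. -/
theorem sum_sq_card_bipartiteAbove_liesOn_le (L : Finset (F × F)) :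
    ∑ p, #(L.bipartiteAbove LiesOn p) ^ 2 ≤ #L * Fintype.card F + #L ^ 2 := by
  let r : F × F → (F × F) × (F × F) → Prop := fun p ll => LiesOn p ll.1 ∧ LiesOn p ll.2
  have hsq (S : Finset (F × F)) : #S ^ 2 = #S + #S.offDiag := by
    have := Nat.le_mul_self #S
    rw [offDiag_card, sq]; omega
  have hoff (p : F × F) : (L.bipartiteAbove LiesOn p).offDiag = L.offDiag.bipartiteAbove r p := by
    ext ⟨l, l'⟩
    simp only [mem_offDiag, mem_bipartiteAbove, r]
    tauto
  have hpair : ∀ ll ∈ L.offDiag, #(univ.bipartiteBelow r ll) ≤ 1 := fun ll hll =>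
    card_le_one.mpr fun p hp p' hp' => by
      simp only [mem_bipartiteBelow, mem_univ, true_and, r] at hp hp'
      exact eq_of_liesOn_of_ne (mem_offDiag.mp hll).2.2 hp.1 hp.2 hp'.1 hp'.2
  calc ∑ p, #(L.bipartiteAbove LiesOn p) ^ 2
      = #L * Fintype.card F + ∑ ll ∈ L.offDiag, #(univ.bipartiteBelow r ll) := by
        simp_rw [hsq, sum_add_distrib, sum_card_bipartiteAbove_liesOn, hoff,
          sum_card_bipartiteAbove_eq_sum_card_bipartiteBelow]
    _ ≤ #L * Fintype.card F + #L ^ 2 := by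
        gcongr
        calc _ ≤ ∑ _ll ∈ L.offDiag, 1 := sum_le_sum hpair
          _ ≤ #L ^ 2 := by rw [sum_const, smul_eq_mul, mul_one, offDiag_card, sq]; omega

theorem sum_sq_card_bipartiteAbove_liesOn_sub_mean_le (L : Finset (F × F)) :
    ∑ p, ((#(L.bipartiteAbove LiesOn p) : ℝ) - #L / Fintype.card F) ^ 2
      ≤ #L * Fintype.card F := by
  have hq : (0 : ℝ) < Fintype.card F := by exact_mod_cast Fintype.card_pos
  have h1 : ∑ p, (#(L.bipartiteAbove LiesOn p) : ℝ) = #L * Fintype.card F := by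
    exact_mod_cast sum_card_bipartiteAbove_liesOn L
  have h2 : ∑ p, (#(L.bipartiteAbove LiesOn p) : ℝ) ^ 2 ≤ #L * Fintype.card F + #L ^ 2 := by
    exact_mod_cast sum_sq_card_bipartiteAbove_liesOn_le L
  simp only [sub_sq, sum_add_distrib, sum_sub_distrib, ← sum_mul, ← mul_sum, h1, sum_const,
    card_univ, Fintype.card_prod, nsmul_eq_mul]
  push_cast
  field_simp
  nlinarith

/-- Vinh's point–line incidence bound, for non-vertical lines. -/
theorem incidences_le (P L : Finset (F × F)) :
    (incidences P L : ℝ) ≤ #P * #L / Fintype.card F + √(Fintype.card F * #P * #L) := by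
  set μ : ℝ := #L / Fintype.card F
  set N : F × F → ℝ := fun p => #(L.bipartiteAbove LiesOn p)
  have hdev : ∑ p ∈ P, (N p - μ) ≤ √(Fintype.card F * #P * #L) :=
    calc _ ≤ |∑ p ∈ P, (N p - μ)| := le_abs_self _
      _ ≤ _ := Real.abs_le_sqrt <| calc
        (∑ p ∈ P, (N p - μ)) ^ 2 ≤ (#P : ℝ) * ∑ p ∈ P, (N p - μ) ^ 2 := by
            exact sq_sum_le_card_mul_sum_sq
        _ ≤ (#P : ℝ) * ∑ p, (N p - μ) ^ 2 := by gcongr; exact subset_univ P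
        _ ≤ (#P : ℝ) * (#L * Fintype.card F) := by
          gcongr; exact sum_sq_card_bipartiteAbove_liesOn_sub_mean_le L
        _ = _ := by ring
  have hsplit : (incidences P L : ℝ) = #P * μ + ∑ p ∈ P, (N p - μ) := by
    rw [incidences, sum_sub_distrib, sum_const, nsmul_eq_mul]; push_cast; ring
  rw [hsplit, mul_div_assoc]
  gcongr

end PointLine

theorem Finset.zero_notMem_pow {M : Type*} [MonoidWithZero M] [NoZeroDivisors M] [Nontrivial M]
    [DecidableEq M] {A : Finset M} (h : (0 : M) ∉ A) : ∀ n : ℕ, (0 : M) ∉ A ^ n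
  | 0 => by simp
  | n + 1 => by
    rw [pow_succ, mem_mul]
    rintro ⟨x, hx, y, hy, hxy⟩
    rcases mul_eq_zero.mp hxy with rfl | rfl
    exacts [zero_notMem_pow h n hx, h hy]

section ProductGrowth

open PointLine

variable {F : Type*} [Field F] [DecidableEq F]

/-- `(m, -(m * b))` is the line `y = m (x - b)`; it meets `(A + A) × (X * A)` in the `#A` points
`(b + c, m c)`, `c ∈ A`. -/
theorem card_mul_card_mul_card_le_incidences {A X : Finset F} (hX : (0 : F) ∉ X) :
    #X * #A * #A ≤
      incidences ((A + A) ×ˢ (X * A)) ((X ×ˢ A).image fun l => (l.1, -(l.1 * l.2))) := by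
  set L := (X ×ˢ A).image fun l => (l.1, -(l.1 * l.2))
  have hL : #L = #X * #A := by
    rw [card_image_of_injOn, card_product]
    rintro ⟨m, b⟩ hmb ⟨m', b'⟩ - h
    obtain ⟨rfl, h⟩ := Prod.mk.inj h
    have hm : m ≠ 0 := fun hm => hX (hm ▸ (mem_product.mp hmb).1)
    exact Prod.ext rfl (mul_left_cancel₀ hm (neg_injective h))
  have hline : ∀ l ∈ L, #A ≤ #(((A + A) ×ˢ (X * A)).bipartiteBelow LiesOn l) := by
    simp only [L, mem_image, mem_product]
    rintro _ ⟨⟨m, b⟩, ⟨hm, hb⟩, rfl⟩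
    calc #A = #(A.image fun c => (b + c, m * c)) :=
          (card_image_of_injective _ fun c c' h => add_left_cancel (Prod.mk.inj h).1).symm
      _ ≤ _ := card_le_card fun p hp => by
          obtain ⟨c, hc, rfl⟩ := mem_image.mp hp
          simp only [mem_bipartiteBelow, mem_product, LiesOn]
          exact ⟨⟨add_mem_add hb hc, mul_mem_mul hm hc⟩, by ring⟩
  rw [← hL, incidences, sum_card_bipartiteAbove_eq_sum_card_bipartiteBelow, ← smul_eq_mul]
  exact card_nsmul_le_sum _ _ _ hline

variable [Fintype F]

theorem min_le_card_mul {A X : Finset F} (hA : A.Nonempty) (hX : X.Nonempty) (hX₀ : (0 : F) ∉ X)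
    {K : ℝ} (hK : 0 < K) (hS : (#(A + A) : ℝ) ≤ K * #A) :
    min (Fintype.card F / (2 * K)) (#X * (#A ^ 2 / (4 * K * Fintype.card F))) ≤ #(X * A) := by
  set q : ℝ := (Fintype.card F : ℝ)
  set y : ℝ := (#(X * A) : ℝ)
  set t : ℝ := (#X : ℝ) * #A ^ 2
  have hq : 0 < q := by simp only [q]; exact_mod_cast Fintype.card_pos
  have ht : 0 < t := by simp only [t]; have := hA.card_pos; have := hX.card_pos; positivity
  have key : t ≤ K * t * y / q + √(q * (K * t * y)) := by
    set P := (A + A) ×ˢ (X * A)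
    set L := (X ×ˢ A).image fun l => (l.1, -(l.1 * l.2))
    have hPL : (#P * #L : ℝ) ≤ K * t * y := by
      have hL : (#L : ℝ) ≤ #X * #A := by
        exact_mod_cast card_image_le.trans (card_product X A).le
      rw [card_product, Nat.cast_mul]
      calc (#(A + A) * y * #L : ℝ) ≤ (K * #A) * y * (#X * #A) := by gcongr
        _ = K * t * y := by ring
    calc t = #X * #A * #A := by ring
      _ ≤ incidences P L := by exact_mod_cast card_mul_card_mul_card_le_incidences hX₀
      _ ≤ #P * #L / q + √(q * #P * #L) := incidences_le P L
      _ ≤ K * t * y / q + √(q * (K * t * y)) := by rw [mul_assoc q]; gcongr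
  rcases le_or_gt (t / 2) (K * t * y / q) with h | h
  · refine (min_le_left _ _).trans ?_
    rw [div_le_iff₀ (by positivity)]
    rw [le_div_iff₀ hq] at h
    nlinarith
  · refine (min_le_right _ _).trans ?_
    have h' : (t / 2) ^ 2 ≤ q * (K * t * y) := by
      rw [← Real.le_sqrt (by positivity) (by positivity)]; linarith
    rw [mul_div_assoc', div_le_iff₀ (by positivity)]
    nlinarith

theorem min_le_card_pow_succ {A : Finset F} (hA : A.Nonempty) (hA₀ : (0 : F) ∉ A) {K : ℝ}
    (hK : 0 < K) (hS : (#(A + A) : ℝ) ≤ K * #A) (hA2 : 4 * K * Fintype.card F ≤ #A ^ 2)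
    (n : ℕ) :
    min (Fintype.card F / (2 * K)) (#A * (#A ^ 2 / (4 * K * Fintype.card F)) ^ n)
      ≤ #(A ^ (n + 1)) := by
  set M : ℝ := Fintype.card F / (2 * K)
  set r : ℝ := #A ^ 2 / (4 * K * Fintype.card F)
  have hM : 0 ≤ M := by positivity
  have hr : 1 ≤ r := (one_le_div (by have := Fintype.card_pos (α := F); positivity)).mpr hA2
  induction n with
  | zero => simp
  | succ n ih =>
    have hgrow : min M (#A * r ^ (n + 1)) ≤ min M (#A * r ^ n) * r := by
      rw [min_mul_of_nonneg _ _ (by positivity), pow_succ, ← mul_assoc]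
      exact min_le_min_right _ (le_mul_of_one_le_right hM hr)
    calc min M (#A * r ^ (n + 1)) ≤ min M (min M (#A * r ^ n) * r) :=
          le_min (min_le_left _ _) hgrow
      _ ≤ min M (#(A ^ (n + 1)) * r) := by gcongr
      _ ≤ #(A ^ (n + 1) * A) := min_le_card_mul hA hA.pow (zero_notMem_pow hA₀ _) hK hS
      _ = #(A ^ (n + 1 + 1)) := by rw [pow_succ _ (n + 1)]

end ProductGrowth

theorem pow_succ_le_pow_of_rpow_le {q b : ℝ} {n : ℕ} (hq : 1 ≤ q)
    (hb : q ^ ((1 : ℝ) / 2 + 1 / (2 * ((n + 1 : ℕ) : ℝ))) ≤ b) :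
    q ^ (n + 1) ≤ b ^ (2 * n + 1) := by
  set e : ℝ := 1 / 2 + 1 / (2 * ((n + 1 : ℕ) : ℝ))
  have he : ((n + 1 : ℕ) : ℝ) ≤ e * ((2 * n + 1 : ℕ) : ℝ) := by
    have : e * ((2 * n + 1 : ℕ) : ℝ) = (n + 1) + n / (2 * (n + 1)) := by
      simp only [e]; push_cast; field_simp; ring
    rw [this]; push_cast
    have : (0 : ℝ) ≤ n / (2 * (n + 1)) := by positivity
    linarith
  calc q ^ (n + 1) = q ^ ((n + 1 : ℕ) : ℝ) := (Real.rpow_natCast q _).symm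
    _ ≤ q ^ (e * ((2 * n + 1 : ℕ) : ℝ)) := Real.rpow_le_rpow_of_exponent_le hq he
    _ = (q ^ e) ^ (2 * n + 1) := by rw [Real.rpow_mul (by linarith), Real.rpow_natCast]
    _ ≤ b ^ (2 * n + 1) := by gcongr

theorem sq_le_and_le_mul_div_pow_of_rpow_le {q K a : ℝ} {n : ℕ} (hq : 1 ≤ q) (hK : 1 ≤ K)
    (ha : 4 * K * q ^ ((1 : ℝ) / 2 + 1 / (2 * ((n + 1 : ℕ) : ℝ))) ≤ a) :
    4 * K * q ≤ a ^ 2 ∧ q ≤ a * (a ^ 2 / (4 * K * q)) ^ n := by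
  obtain ⟨b, rfl⟩ : ∃ b, a = 4 * K * b := ⟨a / (4 * K), by field_simp⟩
  have hb := le_of_mul_le_mul_left ha (by positivity)
  have hb1 : 1 ≤ b := (Real.one_le_rpow hq (by positivity)).trans hb
  have hpow := pow_succ_le_pow_of_rpow_le hq hb
  have hqb : q ≤ b ^ 2 := by
    refine le_of_pow_le_pow_left₀ n.succ_ne_zero (by positivity) (hpow.trans ?_)
    rw [← pow_mul]; exact pow_le_pow_right₀ hb1 (by omega)
  have hr : (4 * K * b) ^ 2 / (4 * K * q) = 4 * K * (b ^ 2 / q) := by field_simp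
  constructor
  · calc 4 * K * q ≤ 4 * K * b ^ 2 := by gcongr
      _ ≤ (4 * K * b) ^ 2 := by nlinarith [sq_nonneg b]
  · calc q = q ^ (n + 1) / q ^ n := by rw [pow_succ, mul_div_cancel_left₀ _ (by positivity)]
      _ ≤ b ^ (2 * n + 1) / q ^ n := by gcongr
      _ = b * (b ^ 2 / q) ^ n := by rw [div_pow, ← pow_mul]; ring
      _ ≤ 4 * K * b * ((4 * K * b) ^ 2 / (4 * K * q)) ^ n := by
        rw [hr]
        gcongr <;> exact le_mul_of_one_le_left (by positivity) (by linarith)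

theorem small_sumset_large_dfold_product_general (d : ℕ) (hd : 1 ≤ d) (C' : ℝ) :
    ∃ C c : ℝ, 0 < C ∧ 0 < c ∧ ∀ (F : Type) [Field F] [Fintype F] [DecidableEq F] (A : Finset F),
      C * (Fintype.card F : ℝ) ^ ((1 : ℝ) / 2 + 1 / (2 * d)) ≤ A.card →
      ((A + A).card : ℝ) ≤ C' * A.card →
      c * (Fintype.card F : ℝ) ≤ ((A ^ d).card : ℝ) := by
  obtain ⟨n, rfl⟩ : ∃ n, d = n + 1 := ⟨d - 1, by omega⟩
  set K := max C' 1
  have hK : 1 ≤ K := le_max_right _ _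
  refine ⟨16 * K, 1 / (4 * K), by positivity, by positivity, fun F _ _ _ A hA hAA => ?_⟩
  set q : ℝ := (Fintype.card F : ℝ)
  set e : ℝ := (1 : ℝ) / 2 + 1 / (2 * ((n + 1 : ℕ) : ℝ))
  have hq : 1 ≤ q := Nat.one_le_cast.mpr Fintype.card_pos
  have hqe : 1 ≤ q ^ e := Real.one_le_rpow hq (by positivity)
  -- Lines of slope `0` all coincide, so `0` is removed; as `|A| ≥ 16`, this costs a factor `2`.
  set A₀ := A.erase 0
  have hA₀A : (#A : ℝ) ≤ #A₀ + 1 := by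
    exact_mod_cast Nat.sub_le_iff_le_add.mp pred_card_le_card_erase
  have hA₀ : 4 * (2 * K) * q ^ e ≤ #A₀ := by nlinarith
  have hS : (#(A₀ + A₀) : ℝ) ≤ 2 * K * #A₀ := by
    have : A₀ + A₀ ⊆ A + A := add_subset_add (erase_subset _ _) (erase_subset _ _)
    calc (#(A₀ + A₀) : ℝ) ≤ C' * #A := (Nat.cast_le.mpr (card_le_card this)).trans hAA
      _ ≤ K * (2 * #A₀) := by gcongr; exacts [le_max_left _ _, by nlinarith]
      _ = 2 * K * #A₀ := by ring
  have hA₀ne : A₀.Nonempty := by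
    rw [← card_pos, ← Nat.cast_pos (α := ℝ)]
    exact lt_of_lt_of_le (by positivity) hA₀
  obtain ⟨hsq, hlarge⟩ := sq_le_and_le_mul_div_pow_of_rpow_le (n := n) hq (by linarith) hA₀
  calc 1 / (4 * K) * q = q / (2 * (2 * K)) := by ring
    _ ≤ min (q / (2 * (2 * K))) (#A₀ * (#A₀ ^ 2 / (4 * (2 * K) * q)) ^ n) :=
        le_min le_rfl ((div_le_self (by positivity) (by linarith)).trans hlarge)
    _ ≤ #(A₀ ^ (n + 1)) :=
        min_le_card_pow_succ hA₀ne (notMem_erase 0 A) (by positivity) hS hsq n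
    _ ≤ #(A ^ (n + 1)) := by gcongr; exact erase_subset 0 A

theorem small_sumset_large_dfold_product (d : ℕ) (hd : 1 ≤ d) (C' : ℝ) (hC' : 0 < C') :
    ∃ C c : ℝ, 0 < C ∧ 0 < c ∧ ∀ (F : Type) [Field F] [Fintype F] [DecidableEq F] (A : Finset F),
      C * (Fintype.card F : ℝ) ^ ((1 : ℝ) / 2 + 1 / (2 * d)) ≤ A.card →
      ((A + A).card : ℝ) ≤ C' * A.card →
      c * (Fintype.card F : ℝ) ≤ ((A ^ d).card : ℝ) :=
  small_sumset_large_dfold_product_general d hd C'
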